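/- arXiv:math/0407367 — 4 statements merged into one kernel-verified Lean document; each statement's English description precedes it below -/
import Mathlib

section
/- Let k ≥ 1 and let t_1,...,t_k, s_1, s_2 be complex numbers such that s_1, s_2, t_1, ..., t_k are pairwise distinct. Then the symmetrization over all permutations π of {1,...,k} of 1/((s_1 - t_{π(1)})(t_{π(1)} - t_{π(2)})···(t_{π(k-1)} - t_{π(k)})(t_{π(k)} - s_2)) equals (-1)^k (s_1 - s_2)^{k-1} / (∏_{j=1}^k (s_1 - t_j) · ∏_{j=1}^k (s_2 - t_j)). -/
/-!
Splitting off the first vertex `p = π 0` of the chain writes the sum over the `k + 1` points `t`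
as `∑ p, (s₁ - t p)⁻¹ * S p`, where `S p` is the same sum over the other `k` points with endpoints
`t p` and `s₂`. By induction, up to a factor independent of `p`, the summand becomes
`w p * (s₁ - t p)⁻¹ * (t p - s₂) ^ k` with `w` the barycentric Lagrange weights of the nodes `t`.
That is the barycentric form, evaluated at `s₁`, of the interpolant of `(X - s₂) ^ k` at the
`k + 1` nodes, i.e. of `(X - s₂) ^ k` itself, so the sum is `(s₁ - s₂) ^ k / ∏ j, (s₁ - t j)`.
-/

open Finset Polynomial

section Lagrange

variable {F ι : Type*} [Field F] [DecidableEq ι] {s : Finset ι} {v : ι → F}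

theorem sum_nodalWeight_mul_eval (hvs : Set.InjOn v s) {f : F[X]} (hf : f.degree < #s) {x : F}
    (hx : ∀ i ∈ s, x ≠ v i) :
    ∑ i ∈ s, Lagrange.nodalWeight s v i * (x - v i)⁻¹ * f.eval (v i)
      = f.eval x / ∏ i ∈ s, (x - v i) := by
  rw [eq_div_iff (prod_ne_zero_iff.mpr fun i hi => sub_ne_zero.mpr (hx i hi)), mul_comm,
    ← Lagrange.eval_nodal, ← Lagrange.eval_interpolate_not_at_node _ hx,
    ← Lagrange.eq_interpolate hvs hf]

theorem sum_nodalWeight_mul_sub_pow (hvs : Set.InjOn v s) {m : ℕ} (hm : m < #s) {x : F}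
    (hx : ∀ i ∈ s, x ≠ v i) (b : F) :
    ∑ i ∈ s, Lagrange.nodalWeight s v i * (x - v i)⁻¹ * (v i - b) ^ m
      = (x - b) ^ m / ∏ i ∈ s, (x - v i) := by
  have hdeg : ((X - C b) ^ m : F[X]).degree < #s := by
    rw [degree_pow, degree_X_sub_C, nsmul_one]
    exact_mod_cast hm
  simpa using sum_nodalWeight_mul_eval hvs hdeg hx

end Lagrange

theorem prod_swap_zero_succ {M : Type*} [CommMonoid M] {n : ℕ} (p : Fin (n + 1))
    (f : Fin (n + 1) → M) :
    ∏ x : Fin n, f (Equiv.swap 0 p x.succ) = ∏ j ∈ univ.erase p, f j := by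
  rw [← prod_equiv (Equiv.swap 0 p) (s := univ.erase 0) (g := f)
    (by simp [Equiv.swap_apply_eq_iff]) (fun _ _ => rfl), Fin.univ_succ, erase_cons, prod_map]
  rfl

def chainProd {R : Type*} [CommRing R] {n : ℕ} (a b : R) (u : Fin (n + 1) → R) : R :=
  (a - u 0) * (∏ i : Fin n, (u i.castSucc - u i.succ)) * (u (Fin.last n) - b)

theorem chainProd_succ {R : Type*} [CommRing R] {n : ℕ} (a b : R) (u : Fin (n + 2) → R) :
    chainProd a b u = (a - u 0) * chainProd (u 0) b (Fin.tail u) := by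
  simp only [chainProd, Fin.prod_univ_succ, Fin.tail, Fin.succ_castSucc, Fin.succ_last,
    Fin.castSucc_zero]
  ring

theorem chainProd_decomposeFin_symm {R : Type*} [CommRing R] {n : ℕ} (a b : R)
    (t : Fin (n + 2) → R) (p : Fin (n + 2)) (e : Equiv.Perm (Fin (n + 1))) :
    chainProd a b (t ∘ Equiv.Perm.decomposeFin.symm (p, e))
      = (a - t p) * chainProd (t p) b ((t ∘ Equiv.swap 0 p ∘ Fin.succ) ∘ e) := by
  rw [chainProd_succ]
  simp only [Function.comp_apply, Equiv.Perm.decomposeFin_symm_apply_zero]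
  congr
  ext x
  simp [Fin.tail, Equiv.Perm.decomposeFin_symm_apply_succ]

theorem sum_perm_inv_chainProd {F : Type*} [Field F] (n : ℕ) (t : Fin (n + 1) → F) (a b : F)
    (ht : Function.Injective t) (ha : ∀ j, a ≠ t j) (hb : ∀ j, b ≠ t j) :
    ∑ π : Equiv.Perm (Fin (n + 1)), (chainProd a b (t ∘ π))⁻¹
      = (-1) ^ (n + 1) * (a - b) ^ n / ((∏ j, (a - t j)) * ∏ j, (b - t j)) := by
  induction n generalizing a with
  | zero =>
    rw [Fintype.sum_subsingleton (ι := Equiv.Perm (Fin 1)) _ 1]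
    simp only [chainProd, Nat.reduceAdd, Equiv.Perm.coe_one, Function.comp_apply, id_eq,
      Fin.prod_univ_zero, Fin.prod_univ_one, mul_one, Fin.last_zero, zero_add, pow_one, pow_zero]
    rw [← neg_sub (t 0) b, mul_neg, div_neg, neg_div, neg_neg, one_div, mul_inv, mul_comm]
  | succ n ih =>
    calc ∑ π : Equiv.Perm (Fin (n + 2)), (chainProd a b (t ∘ π))⁻¹
        = ∑ p, ∑ e, (chainProd a b (t ∘ Equiv.Perm.decomposeFin.symm (p, e)))⁻¹ := by
          rw [← Equiv.sum_comp Equiv.Perm.decomposeFin.symm, Fintype.sum_prod_type]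
      _ = ∑ p, (a - t p)⁻¹ * ((-1) ^ (n + 1) * (t p - b) ^ n /
            ((∏ j ∈ univ.erase p, (t p - t j)) * ∏ j ∈ univ.erase p, (b - t j))) := by
          refine sum_congr rfl fun p _ => ?_
          have htp : ∀ x : Fin (n + 1), t p ≠ t (Equiv.swap 0 p x.succ) := fun x =>
            ht.ne fun h => Fin.succ_ne_zero x (by simpa [Equiv.swap_apply_eq_iff] using h.symm)
          simp_rw [chainProd_decomposeFin_symm, mul_inv, ← mul_sum]
          rw [ih _ _ (ht.comp ((Equiv.injective _).comp (Fin.succ_injective _))) htp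
            (fun x => hb _)]
          simp only [Function.comp_apply, prod_swap_zero_succ p (fun j => t p - t j),
            prod_swap_zero_succ p (fun j => b - t j)]
      _ = (-1) ^ (n + 2) / (∏ j, (b - t j)) *
            ∑ p, Lagrange.nodalWeight univ t p * (a - t p)⁻¹ * (t p - b) ^ (n + 1) := by
          rw [mul_sum]
          refine sum_congr rfl fun p _ => ?_
          rw [Lagrange.nodalWeight, prod_inv_distrib,
            ← mul_prod_erase univ (fun j => b - t j) (mem_univ p)]
          have hbp : b - t p ≠ 0 := sub_ne_zero.mpr (hb p)
          field_simp
          ring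
      _ = (-1) ^ (n + 2) * (a - b) ^ (n + 1) / ((∏ j, (a - t j)) * ∏ j, (b - t j)) := by
          rw [sum_nodalWeight_mul_sub_pow ht.injOn (by simp) (fun i _ => ha i)]
          field_simp

theorem identity_I_general (n : ℕ) (t : Fin (n + 1) → ℂ) (s₁ s₂ : ℂ)
    (ht : Function.Injective t) (hs₁ : ∀ j, s₁ ≠ t j) (hs₂ : ∀ j, s₂ ≠ t j) :
    ∑ π : Equiv.Perm (Fin (n + 1)),
      1 / ((s₁ - t (π 0)) *
        (∏ i : Fin n, (t (π i.castSucc) - t (π i.succ))) *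
        (t (π (Fin.last n)) - s₂))
    = (-1) ^ (n + 1) * (s₁ - s₂) ^ n /
        ((∏ j, (s₁ - t j)) * ∏ j, (s₂ - t j)) := by
  simp only [one_div]
  exact sum_perm_inv_chainProd n t s₁ s₂ ht hs₁ hs₂

/-- Identity (I): symmetrization of the chain product with endpoints `s₁` and `s₂`. -/
theorem identity_I (n : ℕ) (t : Fin (n + 1) → ℂ) (s₁ s₂ : ℂ)
    (ht : Function.Injective t) (hs₁ : ∀ j, s₁ ≠ t j) (hs₂ : ∀ j, s₂ ≠ t j)
    (hs : s₁ ≠ s₂) :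
    ∑ π : Equiv.Perm (Fin (n + 1)),
      1 / ((s₁ - t (π 0)) *
        (∏ i : Fin n, (t (π i.castSucc) - t (π i.succ))) *
        (t (π (Fin.last n)) - s₂))
    = (-1) ^ (n + 1) * (s₁ - s₂) ^ n /
        ((∏ j, (s₁ - t j)) * ∏ j, (s₂ - t j)) :=
  identity_I_general n t s₁ s₂ ht hs₁ hs₂
end

section
/- Let k ≥ 1 and let t_1,...,t_k, s be complex numbers such that s, t_1,...,t_k are pairwise distinct and all t_j are nonzero. Then the sum over all permutations π of {1,...,k} of 1/((s - t_{π(1)})(t_{π(1)} - t_{π(2)})···(t_{π(k-1)} - t_{π(k)}) · t_{π(k)}) equals s^{k-1} / (∏_{j=1}^k (s - t_j) · ∏_{j=1}^k t_j). -/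
open Finset Polynomial Equiv

lemma lagrange_pow (m : ℕ) (t : Fin (m + 1) → ℂ) (ht : Function.Injective t) (s u : ℂ) :
    ∑ p : Fin (m + 1), (t p - u) ^ m *
      ∏ i ∈ Finset.univ.erase p, ((t p - t i)⁻¹ * (s - t i)) = (s - u) ^ m := by
  have hinj : Set.InjOn t (Finset.univ : Finset (Fin (m+1))) := ht.injOn
  have hdeg : ((X - C u) ^ m : ℂ[X]).degree < (Finset.univ : Finset (Fin (m+1))).card := by
    simp [Polynomial.degree_pow, Polynomial.degree_X_sub_C]
    exact_mod_cast Nat.lt_succ_self m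
  have h := Lagrange.eq_interpolate (v := t) hinj hdeg
  have h2 := congrArg (Polynomial.eval s) h
  simp only [Lagrange.interpolate_apply, Polynomial.eval_finset_sum, eval_mul, eval_C,
    eval_pow, eval_sub, eval_X, Lagrange.basis, Polynomial.eval_prod, Lagrange.basisDivisor,
    eval_mul, eval_C, eval_sub, eval_X] at h2
  rw [← h2]

lemma swap_succ_ne (n : ℕ) (p : Fin (n + 2)) (j : Fin (n + 1)) :
    Equiv.swap 0 p j.succ ≠ p := by
  intro h
  have : j.succ = (0 : Fin (n+2)) := by
    have := (Equiv.swap 0 p).injective (a₁ := j.succ) (a₂ := 0)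
    simp only [Equiv.swap_apply_left] at this
    exact this h
  exact Fin.succ_ne_zero j this

lemma prod_swap_succ (n : ℕ) (p : Fin (n + 2)) (f : Fin (n + 2) → ℂ) :
    ∏ j : Fin (n + 1), f (Equiv.swap 0 p j.succ) = ∏ i ∈ Finset.univ.erase p, f i := by
  refine Finset.prod_bij (fun j _ => Equiv.swap 0 p j.succ) ?_ ?_ ?_ ?_
  · intro j _; simp [swap_succ_ne n p j]
  · intro a _ b _ h
    exact Fin.succ_injective _ ((Equiv.swap 0 p).injective h)
  · intro i hi
    have hip : i ≠ p := (Finset.mem_erase.mp hi).1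
    have h0 : Equiv.swap 0 p i ≠ 0 := by
      intro h
      exact hip ((Equiv.swap 0 p).injective (h.trans (Equiv.swap_apply_right 0 p).symm))
    obtain ⟨j, hj⟩ := Fin.exists_succ_eq_of_ne_zero h0
    refine ⟨j, Finset.mem_univ j, ?_⟩
    show Equiv.swap 0 p j.succ = i
    rw [hj]; simp
  · intros; rfl

lemma key : ∀ (n : ℕ) (t : Fin (n + 1) → ℂ) (s u : ℂ),
    Function.Injective t → (∀ j, s ≠ t j) → (∀ j, t j ≠ u) →
    ∑ π : Equiv.Perm (Fin (n + 1)),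
      1 / ((s - t (π 0)) * (∏ i : Fin n, (t (π i.castSucc) - t (π i.succ))) *
        (t (π (Fin.last n)) - u))
    = (s - u) ^ n / ((∏ j, (s - t j)) * ∏ j, (t j - u)) := by
  intro n
  induction n with
  | zero =>
    intro t s u ht hs hu
    have : Subsingleton (Equiv.Perm (Fin (0+1))) := by
      constructor; intro a b; ext x; omega
    rw [Fintype.sum_subsingleton _ 1]
    simp [Fin.last]
  | succ n ih =>
    intro t s u ht hs hu
    rw [← Equiv.sum_comp (Equiv.Perm.decomposeFin (n := n+1)).symm, Fintype.sum_prod_type]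
    have hre : ∀ (p : Fin (n+2)) (e : Equiv.Perm (Fin (n+1))),
        (1 : ℂ) / ((s - t ((Equiv.Perm.decomposeFin.symm (p,e)) 0)) *
          (∏ i : Fin (n+1), (t (Equiv.Perm.decomposeFin.symm (p,e) i.castSucc)
            - t (Equiv.Perm.decomposeFin.symm (p,e) i.succ))) *
          (t (Equiv.Perm.decomposeFin.symm (p,e) (Fin.last (n+1))) - u))
        = (s - t p)⁻¹ * (1 / ((t p - t (Equiv.swap 0 p (e 0).succ)) *
            (∏ i : Fin n, (t (Equiv.swap 0 p (e i.castSucc).succ)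
              - t (Equiv.swap 0 p (e i.succ).succ))) *
            (t (Equiv.swap 0 p (e (Fin.last n)).succ) - u))) := by
      intro p e
      rw [Fin.prod_univ_succ, ← Fin.succ_last]
      simp only [Equiv.Perm.decomposeFin_symm_apply_zero,
        Equiv.Perm.decomposeFin_symm_apply_succ, Fin.castSucc_zero, ← Fin.succ_castSucc]
      simp only [one_div, mul_inv]
      ring
    simp_rw [hre, ← Finset.mul_sum]
    have hIH : ∀ p : Fin (n+2),
        ∑ e : Equiv.Perm (Fin (n+1)), 1 / ((t p - t (Equiv.swap 0 p (e 0).succ)) *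
            (∏ i : Fin n, (t (Equiv.swap 0 p (e i.castSucc).succ)
              - t (Equiv.swap 0 p (e i.succ).succ))) *
            (t (Equiv.swap 0 p (e (Fin.last n)).succ) - u))
        = (t p - u) ^ n / ((∏ i ∈ Finset.univ.erase p, (t p - t i)) *
            ∏ i ∈ Finset.univ.erase p, (t i - u)) := by
      intro p
      have h1 : Function.Injective (fun j : Fin (n+1) => t (Equiv.swap 0 p j.succ)) :=
        ht.comp ((Equiv.swap 0 p).injective.comp (Fin.succ_injective _))
      have h2 : ∀ j : Fin (n+1), t p ≠ t (Equiv.swap 0 p j.succ) := by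
        intro j h
        exact swap_succ_ne n p j (ht h).symm
      have h3 : ∀ j : Fin (n+1), t (Equiv.swap 0 p j.succ) ≠ u := fun j => hu _
      have := ih (fun j : Fin (n+1) => t (Equiv.swap 0 p j.succ)) (t p) u h1 h2 h3
      rw [this, prod_swap_succ n p (fun x => t p - t x), prod_swap_succ n p (fun x => t x - u)]
    simp_rw [hIH]
    rw [← lagrange_pow (n+1) t ht s u, Finset.sum_div]
    refine Finset.sum_congr rfl ?_
    intro p _
    have hD1 : ∏ j, (s - t j) = (s - t p) * ∏ i ∈ Finset.univ.erase p, (s - t i) :=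
      (Finset.mul_prod_erase Finset.univ _ (Finset.mem_univ p)).symm
    have hD2 : ∏ j, (t j - u) = (t p - u) * ∏ i ∈ Finset.univ.erase p, (t i - u) :=
      (Finset.mul_prod_erase Finset.univ _ (Finset.mem_univ p)).symm
    have hsplit : ∏ i ∈ Finset.univ.erase p, ((t p - t i)⁻¹ * (s - t i))
        = (∏ i ∈ Finset.univ.erase p, (t p - t i))⁻¹ *
          ∏ i ∈ Finset.univ.erase p, (s - t i) := by
      rw [Finset.prod_mul_distrib, ← Finset.prod_inv_distrib]
    have hsp : s - t p ≠ 0 := sub_ne_zero_of_ne (hs p)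
    have hpu : t p - u ≠ 0 := sub_ne_zero_of_ne (hu p)
    have hP : (∏ i ∈ Finset.univ.erase p, (t p - t i)) ≠ 0 := by
      rw [Finset.prod_ne_zero_iff]
      intro i hi
      exact sub_ne_zero_of_ne fun h => (Finset.mem_erase.mp hi).1 (ht h.symm)
    have hQ : (∏ i ∈ Finset.univ.erase p, (t i - u)) ≠ 0 := by
      rw [Finset.prod_ne_zero_iff]
      exact fun i _ => sub_ne_zero_of_ne (hu i)
    have hA : (∏ i ∈ Finset.univ.erase p, (s - t i)) ≠ 0 := by
      rw [Finset.prod_ne_zero_iff]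
      exact fun i _ => sub_ne_zero_of_ne (hs i)
    rw [hD1, hD2, hsplit]
    field_simp
    ring

/-- Identity (II): symmetrization of the chain product with endpoints `s` and `0`. -/
theorem identity_II (n : ℕ) (t : Fin (n + 1) → ℂ) (s : ℂ)
    (ht : Function.Injective t) (hs : ∀ j, s ≠ t j) (ht0 : ∀ j, t j ≠ 0) :
    ∑ π : Equiv.Perm (Fin (n + 1)),
      1 / ((s - t (π 0)) *
        (∏ i : Fin n, (t (π i.castSucc) - t (π i.succ))) *
        t (π (Fin.last n)))
    = s ^ n / ((∏ j, (s - t j)) * ∏ j, t j) := by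
  have h := key n t s 0 ht hs ht0
  simpa using h
end

section
/- Let k ≥ 1 and let t_1,...,t_k be pairwise distinct nonzero complex numbers. Then the sum over all permutations π of {1,...,k} of 1/((t_{π(1)} - t_{π(2)})(t_{π(2)} - t_{π(3)})···(t_{π(k-1)} - t_{π(k)}) · t_{π(k)}) equals 1/(t_1 t_2 ··· t_k). -/
open Finset Polynomial Equiv

lemma lemD {k : ℕ} (t : Fin (k + 2) → ℂ) (ht : Function.Injective t) :
    ∑ q : Fin (k + 2), (∏ j ∈ univ.erase q, (t q - t j))⁻¹ = 0 := by
  have hinj : Set.InjOn t (univ : Finset (Fin (k+2))) := ht.injOn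
  have hsum := Lagrange.sum_basis hinj ⟨0, mem_univ 0⟩
  have hcoeff : ∑ q : Fin (k+2), (Lagrange.basis univ t q).coeff (k+1)
      = (1 : ℂ[X]).coeff (k+1) := by rw [← finset_sum_coeff, hsum]
  rw [coeff_one, if_neg (Nat.succ_ne_zero k)] at hcoeff
  rw [← hcoeff]
  refine Finset.sum_congr rfl fun q _ => ?_
  have hdeg : (Lagrange.basis univ t q).natDegree = k + 1 := by
    rw [Lagrange.natDegree_basis hinj (mem_univ q)]
    simp
  have hlc : (Lagrange.basis univ t q).coeff (k+1) = (Lagrange.basis univ t q).leadingCoeff := by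
    rw [Polynomial.leadingCoeff, hdeg]
  rw [← prod_inv_distrib, hlc, Lagrange.basis, leadingCoeff_prod]
  refine Finset.prod_congr rfl fun j hj => ?_
  rw [Lagrange.basisDivisor, leadingCoeff_mul, leadingCoeff_C,
    (monic_X_sub_C (t j)).leadingCoeff, mul_one]

lemma lemC {n : ℕ} (t : Fin (n + 1) → ℂ) (ht : Function.Injective t) (ht0 : ∀ j, t j ≠ 0) :
    ∑ m : Fin (n + 1), (t m * ∏ j ∈ univ.erase m, (t m - t j))⁻¹
      = (-1) ^ n * (∏ j, t j)⁻¹ := by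
  have hinj : Set.InjOn t (univ : Finset (Fin (n+1))) := ht.injOn
  have hsum := Lagrange.sum_basis hinj ⟨0, mem_univ 0⟩
  have heval : ∑ m : Fin (n+1), ((Lagrange.basis univ t m).eval 0) = 1 := by
    rw [← eval_finset_sum, hsum, eval_one]
  have hterm : ∀ m : Fin (n+1),
      (Lagrange.basis univ t m).eval 0
        = (-1)^n * (∏ j, t j) * (t m * ∏ j ∈ univ.erase m, (t m - t j))⁻¹ := by
    intro m
    rw [Lagrange.basis, eval_prod]
    have h1 : ∀ j ∈ univ.erase m, (Lagrange.basisDivisor (t m) (t j)).eval 0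
        = (-1) * t j * (t m - t j)⁻¹ := by
      intro j hj
      rw [Lagrange.basisDivisor]
      simp
      ring
    rw [Finset.prod_congr rfl h1]
    rw [Finset.prod_mul_distrib, Finset.prod_mul_distrib, Finset.prod_const]
    have hcard : (univ.erase m).card = n := by simp
    have hprod : ∏ j ∈ univ.erase m, t j = (∏ j, t j) / t m := by
      rw [eq_div_iff (ht0 m), Finset.prod_erase_mul _ _ (mem_univ m)]
    rw [hcard, hprod, prod_inv_distrib, mul_inv]
    field_simp
  rw [Finset.sum_congr rfl (fun m _ => hterm m), ← Finset.mul_sum] at heval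
  have hA : ((-1:ℂ)^n * ∏ j, t j)⁻¹
      = ∑ m : Fin (n + 1), (t m * ∏ j ∈ univ.erase m, (t m - t j))⁻¹ :=
    inv_eq_of_mul_eq_one_right heval
  rw [← hA, mul_inv]
  have h1 : ((-1:ℂ)^n)⁻¹ = (-1)^n := by
    rw [← inv_pow, inv_neg, inv_one]
  rw [h1]

def permExt (n : ℕ) (m : Fin (n + 2)) (σ : Perm (Fin (n + 1))) : Perm (Fin (n + 2)) :=
  finSuccEquivLast.trans (σ.optionCongr.trans (finSuccEquiv' m).symm)

@[simp] lemma permExt_last (n : ℕ) (m : Fin (n + 2)) (σ : Perm (Fin (n + 1))) :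
    permExt n m σ (Fin.last (n + 1)) = m := by
  simp [permExt]

@[simp] lemma permExt_castSucc (n : ℕ) (m : Fin (n + 2)) (σ : Perm (Fin (n + 1)))
    (i : Fin (n + 1)) : permExt n m σ i.castSucc = m.succAbove (σ i) := by
  simp [permExt]

def permRetr (n : ℕ) (m : Fin (n + 2)) (π : Perm (Fin (n + 2))) : Perm (Fin (n + 1)) :=
  Equiv.removeNone (finSuccEquivLast.symm.trans (π.trans (finSuccEquiv' m)))

lemma permRetr_permExt (n : ℕ) (m : Fin (n + 2)) (σ : Perm (Fin (n + 1))) :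
    permRetr n m (permExt n m σ) = σ := by
  apply Equiv.ext
  intro a
  set e := finSuccEquivLast.symm.trans ((permExt n m σ).trans (finSuccEquiv' m)) with he
  have h : e (some a) = some (σ a) := by
    simp [he, permExt]
  have := Equiv.removeNone_some e ⟨σ a, h⟩
  rw [h] at this
  exact Option.some_injective _ this

lemma permExt_permRetr (n : ℕ) (m : Fin (n + 2)) (π : Perm (Fin (n + 2)))
    (hπ : π (Fin.last (n + 1)) = m) : permExt n m (permRetr n m π) = π := by
  apply Equiv.ext
  intro x
  induction x using Fin.lastCases with
  | last => rw [permExt_last, hπ]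
  | cast i =>
    rw [permExt_castSucc]
    set e := finSuccEquivLast.symm.trans (π.trans (finSuccEquiv' m)) with he
    have hne : π i.castSucc ≠ m := by
      rw [← hπ]
      intro h
      exact absurd (π.injective h) (Fin.castSucc_lt_last i).ne
    obtain ⟨j, hj⟩ : ∃ j, finSuccEquiv' m (π i.castSucc) = some j := by
      rcases h : finSuccEquiv' m (π i.castSucc) with _ | j
      · exact absurd ((finSuccEquiv' m).injective (h.trans (finSuccEquiv'_at m).symm)) hne
      · exact ⟨j, rfl⟩
    have h1 : e (some i) = some j := by simp [he, hj]
    have h2 := Equiv.removeNone_some e ⟨j, h1⟩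
    rw [h1] at h2
    have : permRetr n m π i = j := Option.some_injective _ h2
    rw [this]
    have := congrArg (finSuccEquiv' m).symm hj
    rw [Equiv.symm_apply_apply, finSuccEquiv'_symm_some] at this
    exact this.symm

lemma image_succAbove_univ (n : ℕ) (m : Fin (n+2)) :
    Finset.image m.succAbove univ = univ.erase m := by
  apply Finset.eq_of_subset_of_card_le
  · intro x hx
    simp only [mem_image] at hx
    obtain ⟨i, _, rfl⟩ := hx
    exact mem_erase.mpr ⟨Fin.succAbove_ne m i, mem_univ _⟩
  · rw [card_erase_of_mem (mem_univ m),
      Finset.card_image_of_injective _ Fin.succAbove_right_injective]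
    simp

lemma key_prod (n : ℕ) (t : Fin (n+2) → ℂ) (m : Fin (n+2)) (p : Fin (n+1)) :
    ∏ j ∈ univ.erase (m.succAbove p), (t (m.succAbove p) - t j)
      = (t (m.succAbove p) - t m)
        * ∏ j ∈ univ.erase p, (t (m.succAbove p) - t (m.succAbove j)) := by
  set q := m.succAbove p with hq
  have hqm : q ≠ m := Fin.succAbove_ne m p
  have hset : univ.erase q = insert m ((univ.erase m).erase q) := by
    ext x
    simp only [mem_erase, mem_insert, mem_univ, and_true]
    rcases eq_or_ne x m with rfl | hxm
    · simp [hqm.symm]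
    · simp [hxm]
  have hstep : ∏ j ∈ univ.erase q, (t q - t j)
      = (t q - t m) * ∏ j ∈ (univ.erase m).erase q, (t q - t j) := by
    rw [hset, Finset.prod_insert (by simp [hqm])]
  rw [hstep]
  congr 1
  rw [← image_succAbove_univ n m, ← Finset.image_erase Fin.succAbove_right_injective, hq]
  rw [Finset.prod_image (fun a _ b _ h => Fin.succAbove_right_injective h)]

lemma lemB : ∀ (n : ℕ) (t : Fin (n + 1) → ℂ), Function.Injective t → ∀ m : Fin (n + 1),
    ∑ π ∈ univ.filter (fun π : Perm (Fin (n + 1)) => π (Fin.last n) = m),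
      (∏ i : Fin n, (t (π i.castSucc) - t (π i.succ)))⁻¹
    = (-1) ^ n * (∏ j ∈ univ.erase m, (t m - t j))⁻¹ := by
  intro n
  induction n with
  | zero =>
    intro t ht m
    have : (univ.filter (fun π : Perm (Fin 1) => π (Fin.last 0) = m)) = univ := by
      apply Finset.filter_true_of_mem
      intro π _
      rw [Fin.fin_one_eq_zero (π (Fin.last 0)), Fin.fin_one_eq_zero m]
    rw [this]
    have hm : m = 0 := Fin.fin_one_eq_zero m
    subst hm
    simp [Finset.card_univ]
  | succ n IH =>
    intro t ht m
    set u : Fin (n + 1) → ℂ := fun j => t (m.succAbove j) with hu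
    have hu_inj : Function.Injective u :=
      fun a b h => Fin.succAbove_right_injective (ht h)
    -- step 1: reindex the fiber by Perm (Fin (n+1))
    have step1 : ∑ π ∈ univ.filter (fun π : Perm (Fin (n + 2)) => π (Fin.last (n+1)) = m),
        (∏ i : Fin (n+1), (t (π i.castSucc) - t (π i.succ)))⁻¹
        = ∑ σ : Perm (Fin (n + 1)),
          ((∏ i : Fin n, (u (σ i.castSucc) - u (σ i.succ))) * (u (σ (Fin.last n)) - t m))⁻¹ := by
      refine Finset.sum_nbij' (permRetr n m) (permExt n m) ?_ ?_ ?_ ?_ ?_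
      · intro a _; exact mem_univ _
      · intro σ _
        simp only [mem_filter, mem_univ, true_and]
        exact permExt_last n m σ
      · intro π hπ
        exact permExt_permRetr n m π (mem_filter.mp hπ).2
      · intro σ _
        exact permRetr_permExt n m σ
      · intro π hπ
        obtain ⟨-, hπ2⟩ := mem_filter.mp hπ
        have hrw : ∀ i : Fin (n+1), π i.castSucc = m.succAbove (permRetr n m π i) := by
          intro i
          conv_lhs => rw [← permExt_permRetr n m π hπ2]
          rw [permExt_castSucc]
        congr 1
        rw [Fin.prod_univ_castSucc (fun i : Fin (n+1) =>
          (t (π i.castSucc) - t (π i.succ)))]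
        congr 1
        · refine Finset.prod_congr rfl fun i _ => ?_
          rw [Fin.succ_castSucc, hrw, hrw]
        · rw [Fin.succ_last, hrw, hπ2]
    rw [step1]
    -- step 2: fiber the sum over the value σ (last n) and apply IH
    rw [← Finset.sum_fiberwise univ (fun σ : Perm (Fin (n+1)) => σ (Fin.last n))
      (fun σ => ((∏ i : Fin n, (u (σ i.castSucc) - u (σ i.succ))) * (u (σ (Fin.last n)) - t m))⁻¹)]
    have step2 : ∀ p : Fin (n+1),
        ∑ σ ∈ univ.filter (fun σ : Perm (Fin (n+1)) => σ (Fin.last n) = p),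
          ((∏ i : Fin n, (u (σ i.castSucc) - u (σ i.succ))) * (u (σ (Fin.last n)) - t m))⁻¹
        = (-1)^n * (∏ j ∈ univ.erase (m.succAbove p), (t (m.succAbove p) - t j))⁻¹ := by
      intro p
      have : ∀ σ ∈ univ.filter (fun σ : Perm (Fin (n+1)) => σ (Fin.last n) = p),
          ((∏ i : Fin n, (u (σ i.castSucc) - u (σ i.succ))) * (u (σ (Fin.last n)) - t m))⁻¹
          = (∏ i : Fin n, (u (σ i.castSucc) - u (σ i.succ)))⁻¹ * (u p - t m)⁻¹ := by
        intro σ hσ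
        rw [(mem_filter.mp hσ).2, mul_inv]
      rw [Finset.sum_congr rfl this, ← Finset.sum_mul, IH u hu_inj p, key_prod n t m p,
        mul_inv]
      ring
    rw [Finset.sum_congr rfl (fun p _ => step2 p), ← Finset.mul_sum]
    -- step 3: reindex over q = m.succAbove p and use lemD
    have step3 : ∑ p : Fin (n+1), (∏ j ∈ univ.erase (m.succAbove p), (t (m.succAbove p) - t j))⁻¹
        = ∑ q ∈ univ.erase m, (∏ j ∈ univ.erase q, (t q - t j))⁻¹ := by
      rw [← image_succAbove_univ n m,
        Finset.sum_image (fun a _ b _ h => Fin.succAbove_right_injective h)]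
    rw [step3]
    have step4 : ∑ q ∈ univ.erase m, (∏ j ∈ univ.erase q, (t q - t j))⁻¹
        = - (∏ j ∈ univ.erase m, (t m - t j))⁻¹ := by
      have := lemD t ht
      rw [← Finset.sum_erase_add _ _ (mem_univ m)] at this
      linear_combination this
    rw [step4]
    ring

/-- Identity (III) with `s = 0`: the coefficient `ω_{k,0}` never vanishes. -/
theorem omega_k_zero (n : ℕ) (t : Fin (n + 1) → ℂ)
    (ht : Function.Injective t) (ht0 : ∀ j, t j ≠ 0) :
    ∑ π : Equiv.Perm (Fin (n + 1)),
      1 / ((∏ i : Fin n, (t (π i.castSucc) - t (π i.succ))) * t (π (Fin.last n)))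
    = 1 / ∏ j, t j := by
  rw [← Finset.sum_fiberwise univ (fun π : Perm (Fin (n+1)) => π (Fin.last n))
    (fun π => 1 / ((∏ i : Fin n, (t (π i.castSucc) - t (π i.succ))) * t (π (Fin.last n))))]
  have step : ∀ m : Fin (n+1),
      ∑ π ∈ univ.filter (fun π : Perm (Fin (n+1)) => π (Fin.last n) = m),
        1 / ((∏ i : Fin n, (t (π i.castSucc) - t (π i.succ))) * t (π (Fin.last n)))
      = (-1)^n * (t m * ∏ j ∈ univ.erase m, (t m - t j))⁻¹ := by
    intro m
    have h1 : ∀ π ∈ univ.filter (fun π : Perm (Fin (n+1)) => π (Fin.last n) = m),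
        1 / ((∏ i : Fin n, (t (π i.castSucc) - t (π i.succ))) * t (π (Fin.last n)))
        = (∏ i : Fin n, (t (π i.castSucc) - t (π i.succ)))⁻¹ * (t m)⁻¹ := by
      intro π hπ
      rw [(Finset.mem_filter.mp hπ).2, one_div, mul_inv]
    rw [Finset.sum_congr rfl h1, ← Finset.sum_mul, lemB n t ht m, mul_inv]
    ring
  rw [Finset.sum_congr rfl (fun m _ => step m), ← Finset.mul_sum, lemC t ht ht0, one_div]
  rw [← mul_assoc, ← mul_pow]
  norm_num
end

section
/- Let k ≥ 2 and let t_1,...,t_k, s_1, s_2 be pairwise distinct complex numbers. Then ∑_{j=1}^k [ (-1)^{k-1}(s_1 - t_j)^{k-2} / ( ∏_{l ≠ j}(s_1 - t_l) · ∏_{l ≠ j}(t_j - t_l) ) ] · 1/(t_j - s_2) = (-1)^k (s_1 - s_2)^{k-1} / ( ∏_{j=1}^k (s_1 - t_j) · ∏_{j=1}^k (s_2 - t_j) ). -/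
open Finset Polynomial

lemma lagrange_key (n : ℕ) (t : Fin (n + 2) → ℂ) (s₁ x : ℂ)
    (ht : Function.Injective t) (hx : ∀ j, x ≠ t j) :
    (s₁ - x) ^ (n + 1) =
      (∏ j, (x - t j)) *
        ∑ i, (∏ l ∈ Finset.univ.erase i, (t i - t l))⁻¹ * (x - t i)⁻¹ *
          (s₁ - t i) ^ (n + 1) := by
  classical
  have hInj : Set.InjOn t ↑(Finset.univ : Finset (Fin (n + 2))) := Function.Injective.injOn ht
  set f : ℂ[X] := (C s₁ - X) ^ (n + 1) with hf
  have hdeg : f.degree < (Finset.univ : Finset (Fin (n + 2))).card := by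
    have h1 : (C s₁ - X : ℂ[X]).degree = 1 := by
      rw [show (C s₁ - X : ℂ[X]) = -(X - C s₁) by ring, degree_neg, degree_X_sub_C]
    have : f.degree = (n + 1 : ℕ) := by
      rw [hf, Polynomial.degree_pow, h1]; simp
    rw [this]
    simp only [Finset.card_univ, Fintype.card_fin]
    exact_mod_cast Nat.lt_succ_self (n + 1)
  have hint := Lagrange.eq_interpolate (v := t) hInj hdeg
  have heval := congrArg (Polynomial.eval x) hint
  rw [Lagrange.eval_interpolate_not_at_node _ (fun i _ => hx i)] at heval
  have hevalf : ∀ y : ℂ, f.eval y = (s₁ - y) ^ (n + 1) := by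
    intro y; simp [hf]
  simp only [hevalf] at heval
  rw [heval, Lagrange.eval_nodal]
  congr 1
  refine Finset.sum_congr rfl fun i _ => ?_
  rw [Lagrange.nodalWeight, Finset.prod_inv_distrib]

lemma term_eq (n : ℕ) (a A B c : ℂ) (ha : a ≠ 0) (hA : A ≠ 0) (hB : B ≠ 0) (hc : c ≠ 0) :
    ((-1) ^ (n + 1) * a ^ n / (A * B)) * (1 / (-c))
      = ((-1) ^ (n + 2) / (a * A)) * (B⁻¹ * c⁻¹ * a ^ (n + 1)) := by
  field_simp
  ring

/-- Induction step of identity (I), `k = n + 2 ≥ 2`. -/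
theorem induction_step_I (n : ℕ) (t : Fin (n + 2) → ℂ) (s₁ s₂ : ℂ)
    (ht : Function.Injective t) (hs₁ : ∀ j, s₁ ≠ t j) (hs₂ : ∀ j, s₂ ≠ t j)
    (hs : s₁ ≠ s₂) :
    ∑ j, ((-1) ^ (n + 1) * (s₁ - t j) ^ n /
        ((∏ l ∈ Finset.univ.erase j, (s₁ - t l)) *
          ∏ l ∈ Finset.univ.erase j, (t j - t l))) * (1 / (t j - s₂))
    = (-1) ^ (n + 2) * (s₁ - s₂) ^ (n + 1) /
        ((∏ j, (s₁ - t j)) * ∏ j, (s₂ - t j)) := by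
  classical
  have hPa : ∀ j, (s₁ - t j) ≠ 0 := fun j => sub_ne_zero_of_ne (hs₁ j)
  have hPb : ∀ j, (s₂ - t j) ≠ 0 := fun j => sub_ne_zero_of_ne (hs₂ j)
  have hPaT : (∏ j, (s₁ - t j)) ≠ 0 := Finset.prod_ne_zero_iff.mpr fun j _ => hPa j
  have hPbT : (∏ j, (s₂ - t j)) ≠ 0 := Finset.prod_ne_zero_iff.mpr fun j _ => hPb j
  have hB : ∀ j, (∏ l ∈ Finset.univ.erase j, (t j - t l)) ≠ 0 := by
    intro j
    refine Finset.prod_ne_zero_iff.mpr fun l hl => sub_ne_zero_of_ne fun h => ?_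
    exact (Finset.mem_erase.mp hl).1 (ht h.symm)
  have key := lagrange_key n t s₁ s₂ ht hs₂
  have hS : ∑ i, (∏ l ∈ Finset.univ.erase i, (t i - t l))⁻¹ * (s₂ - t i)⁻¹ *
      (s₁ - t i) ^ (n + 1) = (s₁ - s₂) ^ (n + 1) / ∏ j, (s₂ - t j) := by
    rw [eq_div_iff hPbT, mul_comm]
    exact key.symm
  have hterm : ∀ j : Fin (n + 2),
      ((-1) ^ (n + 1) * (s₁ - t j) ^ n /
        ((∏ l ∈ Finset.univ.erase j, (s₁ - t l)) *
          ∏ l ∈ Finset.univ.erase j, (t j - t l))) * (1 / (t j - s₂))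
      = ((-1) ^ (n + 2) / ∏ j, (s₁ - t j)) *
        ((∏ l ∈ Finset.univ.erase j, (t j - t l))⁻¹ * (s₂ - t j)⁻¹ *
          (s₁ - t j) ^ (n + 1)) := by
    intro j
    have hA : (∏ l ∈ Finset.univ.erase j, (s₁ - t l)) ≠ 0 :=
      Finset.prod_ne_zero_iff.mpr fun l _ => hPa l
    rw [show (∏ l, (s₁ - t l)) = (s₁ - t j) * ∏ l ∈ Finset.univ.erase j, (s₁ - t l) from
        (Finset.mul_prod_erase _ _ (Finset.mem_univ j)).symm,
      show t j - s₂ = -(s₂ - t j) by ring]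
    exact term_eq n _ _ _ _ (hPa j) hA (hB j) (hPb j)
  rw [Finset.sum_congr rfl fun j _ => hterm j, ← Finset.mul_sum, hS]
  rw [div_mul_div_comm, mul_comm ((-1:ℂ)^(n+2)) _, mul_div_assoc, ← div_div]
end
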